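/- Let Q be a finite quiver without directed cycles and let x : v_i → v_j be an arrow. Contracting x produces a quiver with a directed cycle if and only if Q contains a directed path from v_i to v_j not using x, or a directed path from v_j to v_i (the latter is impossible if Q is acyclic, so: the contraction Q_x has a directed cycle iff there is a directed path from v_i to v_j in Q avoiding x). -/

import Mathlib

/-- Let `Q` be a finite quiver with no directed cycles and `x₀ : vᵢ → vⱼ` an arrow.
The contraction `Q_{x₀}` (remove `x₀`, identify `vᵢ` and `vⱼ`, represented by the map
`merge` sending `vⱼ` to `vᵢ`) has a directed cycle if and only if `Q` contains a
(nonempty) directed path from `vᵢ` to `vⱼ` avoiding `x₀`. -/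
theorem contraction_directed_cycle_iff
    (V E : Type) [Fintype V] [Fintype E] [DecidableEq V]
    (s t : E → V) (x₀ : E) (vi vj : V)
    (hs : s x₀ = vi) (ht : t x₀ = vj) (hne : vi ≠ vj)
    (hacyc : ∀ v : V, ¬ Relation.TransGen (fun a b => ∃ e, s e = a ∧ t e = b) v v)
    (merge : V → V) (hmerge : ∀ v, merge v = if v = vj then vi else v) :
    (∃ v : V, Relation.TransGen
        (fun a b => ∃ e, e ≠ x₀ ∧ merge (s e) = a ∧ merge (t e) = b) v v)
      ↔ Relation.TransGen (fun a b => ∃ e, e ≠ x₀ ∧ s e = a ∧ t e = b) vi vj := by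
  set T : V → V → Prop := fun a b => ∃ e, s e = a ∧ t e = b with hT
  set R : V → V → Prop := fun a b => ∃ e, e ≠ x₀ ∧ s e = a ∧ t e = b with hR
  set R' : V → V → Prop := fun a b => ∃ e, e ≠ x₀ ∧ merge (s e) = a ∧ merge (t e) = b with hR'
  have mRT : ∀ a b, R a b → T a b := fun a b ⟨e, _, h1, h2⟩ => ⟨e, h1, h2⟩
  have noRloop : ∀ u, ¬ Relation.TransGen R u u := fun u h => hacyc u (Relation.TransGen.mono mRT _ _ h)
  have noRji : ¬ Relation.TransGen R vj vi := fun h =>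
    hacyc vj ((Relation.TransGen.mono mRT _ _ h).tail ⟨x₀, hs, ht⟩)
  have mvi : merge vi = vi := by rw [hmerge]; exact if_neg hne
  have mvj : merge vj = vi := by rw [hmerge]; exact if_pos rfl
  have mergeEq : ∀ u w : V, merge u = merge w →
      u = w ∨ (u = vi ∧ w = vj) ∨ (u = vj ∧ w = vi) := by
    intro u w h
    rw [hmerge, hmerge] at h
    by_cases hu : u = vj
    · by_cases hw : w = vj
      · exact Or.inl (hu.trans hw.symm)
      · rw [if_pos hu, if_neg hw] at h
        exact Or.inr (Or.inr ⟨hu, h.symm⟩)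
    · by_cases hw : w = vj
      · rw [if_neg hu, if_pos hw] at h
        exact Or.inr (Or.inl ⟨h, hw⟩)
      · rw [if_neg hu, if_neg hw] at h
        exact Or.inl h
  constructor
  · rintro ⟨v, h⟩
    -- invariant D for lifted paths
    set D : V → V → Prop := fun a' b' => Relation.TransGen R vi vj ∨ Relation.TransGen R a' b' ∨
        (Relation.TransGen R a' vj ∧ Relation.TransGen R vi b') ∨
        (Relation.TransGen R a' vi ∧ Relation.TransGen R vj b') with hD
    have key : ∀ b, Relation.TransGen R' v b →
        ∃ a' b', merge a' = v ∧ merge b' = b ∧ D a' b' := by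
      intro b h
      induction h with
      | single hstep =>
        obtain ⟨e, he, h1, h2⟩ := hstep
        exact ⟨s e, t e, h1, h2, Or.inr (Or.inl (Relation.TransGen.single ⟨e, he, rfl, rfl⟩))⟩
      | tail hab hstep ih =>
        obtain ⟨e, he, h1, h2⟩ := hstep
        obtain ⟨a', b', hma, hmb, hd⟩ := ih
        have hgap := mergeEq b' (s e) (hmb.trans h1.symm)
        have step : ∀ u, s e = u → R u (t e) := fun u hu => ⟨e, he, hu, rfl⟩
        rcases hgap with hbs | ⟨hbvi, hsvj⟩ | ⟨hbvj, hsvi⟩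
        · -- no jump: b' = s e
          refine ⟨a', t e, hma, h2, ?_⟩
          rcases hd with hc | hp | ⟨hp1, hp2⟩ | ⟨hp1, hp2⟩
          · exact Or.inl hc
          · exact Or.inr (Or.inl (hp.tail (step b' hbs.symm)))
          · exact Or.inr (Or.inr (Or.inl ⟨hp1, hp2.tail (step b' hbs.symm)⟩))
          · exact Or.inr (Or.inr (Or.inr ⟨hp1, hp2.tail (step b' hbs.symm)⟩))
        · -- jump vi → vj (via x₀): b' = vi, s e = vj
          refine ⟨a', t e, hma, h2, ?_⟩
          rcases hd with hc | hp | ⟨hp1, hp2⟩ | ⟨hp1, hp2⟩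
          · exact Or.inl hc
          · exact Or.inr (Or.inr (Or.inr ⟨hbvi ▸ hp,
              Relation.TransGen.single (step vj hsvj)⟩))
          · exact absurd (hbvi ▸ hp2) (noRloop vi)
          · exact absurd (hbvi ▸ hp2) noRji
        · -- jump vj → vi (identification): b' = vj, s e = vi
          refine ⟨a', t e, hma, h2, ?_⟩
          rcases hd with hc | hp | ⟨hp1, hp2⟩ | ⟨hp1, hp2⟩
          · exact Or.inl hc
          · exact Or.inr (Or.inr (Or.inl ⟨hbvj ▸ hp,
              Relation.TransGen.single (step vi hsvi)⟩))
          · exact Or.inl (show Relation.TransGen R vi vj from hbvj ▸ hp2)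
          · exact absurd (hbvj ▸ hp2) (noRloop vj)
    obtain ⟨a', b', hma, hmb, hd⟩ := key v h
    have hgap := mergeEq b' a' (hmb.trans hma.symm)
    rcases hgap with hba | ⟨hbvi, havj⟩ | ⟨hbvj, havi⟩
    · -- closing seam with no jump: b' = a'
      rcases hd with hc | hp | ⟨hp1, hp2⟩ | ⟨hp1, hp2⟩
      · exact hc
      · exact absurd (hba ▸ hp) (noRloop a')
      · exact (hba ▸ hp2).trans hp1
      · exact absurd ((hba ▸ hp2).trans hp1) noRji
    · -- seam jump vi → vj: b' = vi, a' = vj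
      rcases hd with hc | hp | ⟨hp1, hp2⟩ | ⟨hp1, hp2⟩
      · exact hc
      · exact absurd (havj ▸ hbvi ▸ hp) noRji
      · exact absurd (havj ▸ hp1) (noRloop vj)
      · exact absurd (hbvi ▸ hp2) noRji
    · -- seam jump vj → vi: b' = vj, a' = vi
      rcases hd with hc | hp | ⟨hp1, hp2⟩ | ⟨hp1, hp2⟩
      · exact hc
      · exact show Relation.TransGen R vi vj from havi ▸ hbvj ▸ hp
      · exact show Relation.TransGen R vi vj from hbvj ▸ hp2
      · exact absurd (havi ▸ hp1) (noRloop vi)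
  · intro h
    refine ⟨vi, ?_⟩
    have lift : ∀ a b, R a b → R' (merge a) (merge b) := by
      rintro a b ⟨e, he, h1, h2⟩
      exact ⟨e, he, by rw [h1], by rw [h2]⟩
    have : Relation.TransGen R' (merge vi) (merge vj) := Relation.TransGen.lift (p := R') merge lift _ _ h
    rwa [mvi, mvj] at this
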